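/- For 0 < m < M and p ≥ 1, the generalized Kantorovich constant satisfies K(m,M,p) ≤ (M/m)^{p−1}, where K(m,M,p) = ((p−1)^{p−1}/p^p) · (M^p − m^p)^p / ((M−m)(mM^p − Mm^p)^{p−1}). -/

import Mathlib

/-!
Writing `A = M^p - m^p` and `D = m M^p - M m^p`, the constant factors as
`K(m,M,p) = ((p-1) A / (p D))^(p-1) · A / (p (M-m))`.
Both factors are controlled by the Young-type inequality `p a b^(p-1) ≤ a^p + (p-1) b^p`:
for `(a, b) = (m, M)` it is the tangent-line bound `A ≤ p M^(p-1) (M-m)` of the convex map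
`t ↦ t^p`, and for `(a, b) = (M, m)` it gives `(p-1) A ≤ p M (M^(p-1) - m^(p-1)) = p D / m`.
Hence `K(m,M,p) ≤ (1/m)^(p-1) · M^(p-1)`.
-/

/-- The generalized Kantorovich (Ky Fan–Furuta) constant
`K(m,M,p) = ((p-1)^{p-1}/p^p) · (M^p - m^p)^p / ((M-m)(m M^p - M m^p)^{p-1})`. -/
noncomputable def kantorovichConst (m M p : ℝ) : ℝ :=
  ((p - 1) ^ (p - 1) / p ^ p) * (M ^ p - m ^ p) ^ p /
    ((M - m) * (m * M ^ p - M * m ^ p) ^ (p - 1))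

namespace Real

variable {a b x y p : ℝ}

lemma rpow_eq_rpow_sub_one_mul (hx : 0 ≤ x) (hp : p ≠ 0) : x ^ p = x ^ (p - 1) * x := by
  simpa using rpow_add_one' hx (y := p - 1) (by simpa using hp)

lemma mul_mul_rpow_sub_one_le_rpow_add (ha : 0 ≤ a) (hb : 0 ≤ b) (hp : 1 ≤ p) :
    p * a * b ^ (p - 1) ≤ a ^ p + (p - 1) * b ^ p := by
  have hp0 : 0 < p := by linarith
  have hamgm := geom_mean_le_arith_mean2_weighted (inv_nonneg.2 hp0.le)
    (sub_nonneg.2 (inv_le_one_of_one_le₀ hp)) (rpow_nonneg ha p) (rpow_nonneg hb p)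
    (add_sub_cancel p⁻¹ 1)
  rw [rpow_rpow_inv ha hp0.ne', ← rpow_mul hb, mul_one_sub, mul_inv_cancel₀ hp0.ne'] at hamgm
  calc p * a * b ^ (p - 1) = p * (a * b ^ (p - 1)) := mul_assoc _ _ _
    _ ≤ p * (p⁻¹ * a ^ p + (1 - p⁻¹) * b ^ p) := by gcongr
    _ = a ^ p + (p - 1) * b ^ p := by field_simp

lemma rpow_sub_rpow_le_mul_sub (hx : 0 ≤ x) (hy : 0 ≤ y) (hp : 1 ≤ p) :
    y ^ p - x ^ p ≤ p * y ^ (p - 1) * (y - x) := by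
  linear_combination mul_mul_rpow_sub_one_le_rpow_add hx hy hp +
    p * rpow_eq_rpow_sub_one_mul hy (p := p) (by linarith)

lemma sub_one_mul_rpow_sub_rpow_le (hx : 0 ≤ x) (hy : 0 ≤ y) (hp : 1 ≤ p) :
    (p - 1) * (y ^ p - x ^ p) ≤ p * y * (y ^ (p - 1) - x ^ (p - 1)) := by
  linear_combination mul_mul_rpow_sub_one_le_rpow_add hy hx hp +
    p * rpow_eq_rpow_sub_one_mul hy (p := p) (by linarith)

end Real

open Real

lemma kantorovichConst_eq_mul {m M p : ℝ} (hp : 1 ≤ p) (ha : 0 ≤ M ^ p - m ^ p)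
    (hD : 0 ≤ m * M ^ p - M * m ^ p) :
    kantorovichConst m M p =
      ((p - 1) * (M ^ p - m ^ p) / (p * (m * M ^ p - M * m ^ p))) ^ (p - 1) *
        ((M ^ p - m ^ p) / (p * (M - m))) := by
  have hp0 : 0 < p := by linarith
  rw [kantorovichConst, div_rpow (by positivity) (by positivity), mul_rpow (by linarith) ha,
    mul_rpow hp0.le hD, rpow_eq_rpow_sub_one_mul ha hp0.ne',
    rpow_eq_rpow_sub_one_mul hp0.le hp0.ne']
  simp only [div_eq_mul_inv, mul_inv]
  ring

/-- For `0 < m < M` and `p ≥ 1`, the generalized Kantorovich constant satisfies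
`K(m,M,p) ≤ (M/m)^{p-1}`. -/
theorem kantorovichConst_le (m M p : ℝ) (hm : 0 < m) (hmM : m < M) (hp : 1 ≤ p) :
    kantorovichConst m M p ≤ (M / m) ^ (p - 1) := by
  have hM : 0 < M := hm.trans hmM
  have hp1 : 0 ≤ p - 1 := by linarith
  have ha : 0 < M ^ p - m ^ p := sub_pos.2 (rpow_lt_rpow hm.le hmM (by linarith))
  have hD : m * M ^ p - M * m ^ p = m * M * (M ^ (p - 1) - m ^ (p - 1)) := by
    rw [rpow_eq_rpow_sub_one_mul hM.le (by linarith), rpow_eq_rpow_sub_one_mul hm.le (by linarith)]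
    ring
  have hD_nonneg : 0 ≤ m * M ^ p - M * m ^ p := by
    rw [hD]
    have := sub_nonneg.2 (rpow_le_rpow hm.le hmM.le hp1)
    positivity
  have hratio : (p - 1) * (M ^ p - m ^ p) / (p * (m * M ^ p - M * m ^ p)) ≤ m⁻¹ := by
    refine div_le_of_le_mul₀ (by positivity) (by positivity) ?_
    calc (p - 1) * (M ^ p - m ^ p) ≤ p * M * (M ^ (p - 1) - m ^ (p - 1)) :=
          sub_one_mul_rpow_sub_rpow_le hm.le hM.le hp
      _ = m⁻¹ * (p * (m * M ^ p - M * m ^ p)) := by rw [hD]; field_simp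
  have hmean : (M ^ p - m ^ p) / (p * (M - m)) ≤ M ^ (p - 1) :=
    div_le_of_le_mul₀ (mul_nonneg (by linarith) (sub_nonneg.2 hmM.le)) (by positivity)
      (by linarith [rpow_sub_rpow_le_mul_sub hm.le hM.le hp])
  rw [kantorovichConst_eq_mul hp ha.le hD_nonneg, div_eq_inv_mul M m,
    mul_rpow (by positivity) hM.le]
  gcongr
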